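/- Let T be a tree of order at least 3, let v be a vertex of T with a leaf-neighbor u, and let D be a disjunctive dominating set of T. Then the set D′ defined by D′ = (D \ (leaf-neighbors of v)) ∪ {v} if D contains a leaf-neighbor of v, and D′ = D otherwise, is a disjunctive dominating set of T − u of cardinality at most |D|. -/

import Mathlib

open SimpleGraph

/-- A disjunctive dominating set: every vertex not in `D` has a neighbor in `D`
or at least two vertices of `D` at distance exactly `2`. -/
def IsDisjDomSet {V : Type*} (G : SimpleGraph V) (D : Set V) : Prop :=
  ∀ v ∉ D, (∃ u ∈ D, G.Adj v u) ∨
    (∃ w₁ ∈ D, ∃ w₂ ∈ D, w₁ ≠ w₂ ∧ G.dist v w₁ = 2 ∧ G.dist v w₂ = 2)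

/-- The disjunctive domination number. -/
noncomputable def disjDomNum {V : Type*} (G : SimpleGraph V) : ℕ :=
  sInf {n | ∃ D : Set V, IsDisjDomSet G D ∧ D.ncard = n}

/-- A leaf is a vertex of degree one. -/
def IsLeaf {V : Type*} (G : SimpleGraph V) (v : V) : Prop :=
  (G.neighborSet v).ncard = 1

/-- A support vertex is a vertex adjacent to a leaf. -/
def IsSupport {V : Type*} (G : SimpleGraph V) (v : V) : Prop :=
  ∃ u, G.Adj v u ∧ IsLeaf G u

/-!
The new set `D'` is itself a disjunctive dominating set of `T` avoiding `u`: a leaf-neighbor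
`w` of `v` can only dominate some other vertex `x` through `v` (either `x = v`, or `v` is the middle
vertex of an `x`–`w` path of length two), so `v` takes over its role. Removing a leaf `u ∉ D'`
then keeps `D'` disjunctively dominating, because `u` is never the middle vertex of a path of
length two: both ends would be its unique neighbor. Finally `D'` trades at least one vertex
of `D` for `v`.
-/

namespace SimpleGraph

variable {V : Type*} {G : SimpleGraph V}

theorem dist_eq_two_iff {x y : V} :
    G.dist x y = 2 ↔ x ≠ y ∧ ¬ G.Adj x y ∧ (G.commonNeighbors x y).Nonempty := by
  rw [dist, ENat.toNat_eq_iff two_ne_zero, Nat.cast_ofNat, edist_eq_two_iff]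

theorem dist_induce_eq_two {S : Set V} {x y : S} {m : V} (hm : m ∈ S)
    (hxm : G.Adj x m) (hmy : G.Adj m y) (h : G.dist x y = 2) :
    (G.induce S).dist x y = 2 := by
  obtain ⟨hne, hnadj, -⟩ := dist_eq_two_iff.mp h
  exact dist_eq_two_iff.mpr ⟨fun hxy => hne (congrArg Subtype.val hxy), hnadj,
    ⟨⟨m, hm⟩, hxm, hmy.symm⟩⟩

end SimpleGraph

theorem IsLeaf.eq_of_adj {V : Type*} {G : SimpleGraph V} {u v m : V}
    (hu : IsLeaf G u) (hv : G.Adj v u) (hm : G.Adj m u) : m = v := by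
  obtain ⟨a, ha⟩ := Set.ncard_eq_one.mp hu
  have hva : v ∈ G.neighborSet u := hv.symm
  have hma : m ∈ G.neighborSet u := hm.symm
  rw [ha, Set.mem_singleton_iff] at hva hma
  rw [hva, hma]

def leafNeighbors {V : Type*} (G : SimpleGraph V) (v : V) : Set V :=
  {w | G.Adj v w ∧ IsLeaf G w}

namespace IsDisjDomSet

variable {V : Type*} {G : SimpleGraph V} {D : Set V}

theorem diff_leafNeighbors_union_singleton (hD : IsDisjDomSet G D) (v : V) :
    IsDisjDomSet G (D \ leafNeighbors G v ∪ {v}) := by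
  intro x hx
  simp only [Set.mem_union, Set.mem_sdiff, Set.mem_singleton_iff, not_or, not_and, not_not]
    at hx
  obtain ⟨hxD, hxv⟩ := hx
  have hvD' : v ∈ D \ leafNeighbors G v ∪ {v} := Or.inr rfl
  have adj_v_of_dist_two {w : V} (hw : w ∈ leafNeighbors G v) (h : G.dist x w = 2) :
      G.Adj x v := by
    obtain ⟨m, hxm, hmw⟩ := (dist_eq_two_iff.mp h).2.2
    rwa [hw.2.eq_of_adj hw.1 hmw.symm] at hxm
  by_cases hxD' : x ∈ D
  · exact Or.inl ⟨v, hvD', (hxD hxD').1.symm⟩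
  rcases hD x hxD' with ⟨y, hyD, hxy⟩ | ⟨w₁, hw₁D, w₂, hw₂D, hne, hd₁, hd₂⟩
  · by_cases hy : y ∈ leafNeighbors G v
    · exact absurd (hy.2.eq_of_adj hy.1 hxy) hxv
    · exact Or.inl ⟨y, Or.inl ⟨hyD, hy⟩, hxy⟩
  · by_cases hw₁ : w₁ ∈ leafNeighbors G v
    · exact Or.inl ⟨v, hvD', adj_v_of_dist_two hw₁ hd₁⟩
    by_cases hw₂ : w₂ ∈ leafNeighbors G v
    · exact Or.inl ⟨v, hvD', adj_v_of_dist_two hw₂ hd₂⟩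
    exact Or.inr ⟨w₁, Or.inl ⟨hw₁D, hw₁⟩, w₂, Or.inl ⟨hw₂D, hw₂⟩, hne, hd₁, hd₂⟩

theorem induce_ne_of_isLeaf {u : V} (hu : IsLeaf G u) (hD : IsDisjDomSet G D) (huD : u ∉ D) :
    IsDisjDomSet (G.induce {x | x ≠ u}) {w : ↥{x | x ≠ u} | (w : V) ∈ D} := by
  have ne_of_mem {w : V} (hw : w ∈ D) : w ≠ u := fun h => huD (h ▸ hw)
  rintro ⟨x, hxu⟩ hx
  rcases hD x hx with ⟨y, hyD, hxy⟩ | ⟨w₁, hw₁D, w₂, hw₂D, hne, hd₁, hd₂⟩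
  · exact Or.inl ⟨⟨y, ne_of_mem hyD⟩, hyD, hxy⟩
  · have dist_two {w : V} (hwu : w ≠ u) (hd : G.dist x w = 2) :
        (G.induce {x | x ≠ u}).dist ⟨x, hxu⟩ ⟨w, hwu⟩ = 2 := by
      obtain ⟨hxw, -, m, hxm, hwm⟩ := dist_eq_two_iff.mp hd
      refine dist_induce_eq_two (m := m) ?_ hxm hwm.symm hd
      rintro rfl
      exact hxw (hu.eq_of_adj hwm hxm)
    exact Or.inr ⟨⟨w₁, ne_of_mem hw₁D⟩, hw₁D, ⟨w₂, ne_of_mem hw₂D⟩, hw₂D,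
      fun h => hne (congrArg Subtype.val h), dist_two _ hd₁, dist_two _ hd₂⟩

end IsDisjDomSet

theorem Set.ncard_sdiff_union_singleton_le {α : Type*} {s t : Set α} {a : α} (b : α)
    (hs : s.Finite) (has : a ∈ s) (hat : a ∈ t) : (s \ t ∪ {b}).ncard ≤ s.ncard := by
  have hsub : s \ t ∪ {b} ⊆ insert b (s \ {a}) := by
    rintro x (⟨hxs, hxt⟩ | rfl)
    · exact Or.inr ⟨hxs, fun hxa => hxt (hxa ▸ hat)⟩
    · exact Or.inl rfl
  calc (s \ t ∪ {b}).ncard ≤ (insert b (s \ {a})).ncard :=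
        Set.ncard_le_ncard hsub (hs.sdiff.insert b)
    _ ≤ (s \ {a}).ncard + 1 := Set.ncard_insert_le b _
    _ = s.ncard := Set.ncard_sdiff_singleton_add_one has hs

theorem disjDomSet_delete_leaf_general {V : Type*} [Fintype V] (G : SimpleGraph V)
    (v u : V)
    (hadj : G.Adj v u) (hu : IsLeaf G u)
    (D : Set V) (hD : IsDisjDomSet G D) (D' : Set V)
    (h1 : (∃ w ∈ D, G.Adj v w ∧ IsLeaf G w) →
      D' = (D \ {w | G.Adj v w ∧ IsLeaf G w}) ∪ {v})
    (h2 : (¬ ∃ w ∈ D, G.Adj v w ∧ IsLeaf G w) → D' = D) :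
    IsDisjDomSet (G.induce {x | x ≠ u}) {w : ↥{x | x ≠ u} | (w : V) ∈ D'} ∧
    {w : ↥{x | x ≠ u} | (w : V) ∈ D'}.ncard ≤ D.ncard := by
  obtain ⟨hD'dom, huD', hcard⟩ : IsDisjDomSet G D' ∧ u ∉ D' ∧ D'.ncard ≤ D.ncard := by
    by_cases hw : ∃ w ∈ D, G.Adj v w ∧ IsLeaf G w
    · obtain ⟨w₀, hw₀D, hw₀⟩ := hw
      rw [h1 ⟨w₀, hw₀D, hw₀⟩]
      refine ⟨hD.diff_leafNeighbors_union_singleton v, ?_,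
        Set.ncard_sdiff_union_singleton_le v D.toFinite hw₀D hw₀⟩
      rintro (⟨-, hul⟩ | rfl)
      exacts [hul ⟨hadj, hu⟩, G.irrefl hadj]
    · rw [h2 hw]
      exact ⟨hD, fun huD => hw ⟨u, huD, hadj, hu⟩, le_rfl⟩
  refine ⟨hD'dom.induce_ne_of_isLeaf hu huD', ?_⟩
  calc {w : ↥{x | x ≠ u} | (w : V) ∈ D'}.ncard = D'.ncard :=
        Set.ncard_preimage_of_injective_subset_range Subtype.val_injective
          fun x hx => ⟨⟨x, fun hxu => huD' (hxu ▸ hx)⟩, rfl⟩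
    _ ≤ D.ncard := hcard

theorem disjDomSet_delete_leaf {V : Type*} [Fintype V] (G : SimpleGraph V)
    (hT : G.IsTree) (hn : 3 ≤ Fintype.card V) (v u : V)
    (hadj : G.Adj v u) (hu : IsLeaf G u)
    (D : Set V) (hD : IsDisjDomSet G D) (D' : Set V)
    (h1 : (∃ w ∈ D, G.Adj v w ∧ IsLeaf G w) →
      D' = (D \ {w | G.Adj v w ∧ IsLeaf G w}) ∪ {v})
    (h2 : (¬ ∃ w ∈ D, G.Adj v w ∧ IsLeaf G w) → D' = D) :
    IsDisjDomSet (G.induce {x | x ≠ u}) {w : ↥{x | x ≠ u} | (w : V) ∈ D'} ∧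
    {w : ↥{x | x ≠ u} | (w : V) ∈ D'}.ncard ≤ D.ncard :=
  disjDomSet_delete_leaf_general G v u hadj hu D hD D' h1 h2
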